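/- arXiv:0810.0868 — 2 statements merged into one kernel-verified Lean document; each statement's English description precedes it below -/
import Mathlib

section
/- Let T ∈ BPT(n), rooted as described, and let v be an internal vertex with exactly one internal child v₁. Then for every s ≥ 1: R(v,s,0) = ∑_{k₁ ≥ 0} R(v₁, s−1, k₁), and for every k ≥ 1, R(v,s,k) = R(v₁, s, k−1) · (2k+1). -/
open scoped Classical

noncomputable section

/-- `b n = (2n-5)!!`, the number of fully resolved phylogenetic trees on `n` leaves. -/
def numBPT (n : ℕ) : ℕ := ∏ k ∈ Finset.Icc 3 n, (2 * k - 5)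

/-- `β m = b (m+3)`, the number of fully resolved phylogenetic trees with exactly `m`
internal edges. -/
def beta (m : ℕ) : ℕ := numBPT (m + 3)

/-- A rooted binary tree with leaves labelled by `α`: every internal vertex has exactly
two children.  This is the structure obtained from a fully resolved phylogenetic tree
`T ∈ BPT(n)` by deleting leaf `n` and rooting at the vertex `v₀` that was adjacent to
leaf `n`. -/
inductive RTree (α : Type) : Type
  | leaf (a : α) : RTree α
  | node (l r : RTree α) : RTree α

namespace RTree

variable {α : Type}

/-- `t` is an internal vertex (not a leaf). -/
def isNode : RTree α → Prop
  | leaf _ => False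
  | node _ _ => True

/-- The multiset of leaf labels of `t`. -/
def labels : RTree α → Multiset α
  | leaf a => {a}
  | node l r => labels l + labels r

/-- The subtree `T_v` consisting of a vertex `v` (addressed by the path `p` of
left/right choices from the root) and all of its descendants. -/
def subtreeAt : RTree α → List Bool → Option (RTree α)
  | t, [] => some t
  | leaf _, _ :: _ => none
  | node l r, b :: p => subtreeAt (if b then r else l) p

/-- The set of vertices of `t`, addressed by paths from the root. -/
def positions : RTree α → Finset (List Bool)
  | leaf _ => {[]}
  | node l r =>
      insert [] (((positions l).image (List.cons false)) ∪ ((positions r).image (List.cons true)))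

/-- `E̊(t)`: the internal edges of the rooted tree, i.e. the edges both of whose
endpoints are internal vertices.  An edge is addressed by the position of its lower
(child) endpoint, which must be a non-root internal vertex (its parent is automatically
internal). -/
def internalEdges (t : RTree α) : Finset (List Bool) :=
  (positions t).filter (fun p => p ≠ [] ∧ ∃ t', subtreeAt t p = some t' ∧ t'.isNode)

/-- One step of adjacency in the forest `t - E`: vertices `p` and `q` are joined by an
edge of the tree (one is the parent of the other) that has not been cut (is not in `E`). -/
def stepRel (E : Finset (List Bool)) (p q : List Bool) : Prop :=
  (q = p.dropLast ∧ p ≠ [] ∧ p ∉ E) ∨ (p = q.dropLast ∧ q ≠ [] ∧ q ∉ E)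

/-- The connected component of the forest `t - E` containing the vertex `p`. -/
def component (t : RTree α) (E : Finset (List Bool)) (p : List Bool) : Finset (List Bool) :=
  (positions t).filter (fun q => Relation.ReflTransGen (stepRel E) p q)

/-- The set of connected components `F₁, …, F_{|E|+1}` of the forest `t - E`. -/
def components (t : RTree α) (E : Finset (List Bool)) : Finset (Finset (List Bool)) :=
  (positions t).image (component t E)

/-- `|E̊(F)|`: the number of internal edges of the tree contained in (i.e. with both
endpoints in) the component `C` of the forest `t - E`. -/
def compEdgeCount (t : RTree α) (E : Finset (List Bool)) (C : Finset (List Bool)) : ℕ :=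
  ((internalEdges t).filter (fun p => p ∉ E ∧ p ∈ C)).card

/-- `N_E(T_v) = ∏ᵢ β(|E̊(Fᵢ)|)`, the product over the components of `T_v - E`. -/
def NEdges (t : RTree α) (E : Finset (List Bool)) : ℕ :=
  ∏ C ∈ components t E, beta (compEdgeCount t E C)

/-- `κ(v,E)`: the number of internal edges in the component of `T_v - E` containing
the root `v` of `T_v`. -/
def kappa (t : RTree α) (E : Finset (List Bool)) : ℕ :=
  compEdgeCount t E (component t E [])

/-- `R(v,s,k) = ∑_{E ⊆ E̊(T_v), |E| = s, κ(v,E) = k} N_E(T_v)`. -/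
def R (t : RTree α) (s k : ℕ) : ℕ :=
  ∑ E ∈ (internalEdges t).powerset.filter (fun E => E.card = s ∧ kappa t E = k),
    NEdges t E

end RTree

end

open RTree

/-! The internal edges of `T_v` are the edge `v v₁` together with those of `T_{v₁}`. A cut set
containing `v v₁` isolates `v` with its leaf, so `κ = 0` and the remaining components are those
of `T_{v₁}`. A cut set avoiding `v v₁` attaches `v` and its leaf to the root component of
`T_{v₁}`, which gains one internal edge: `κ` grows by one and its factor `β(κ₁)` becomes
`β(κ₁ + 1) = (2κ₁ + 3) β(κ₁)`. -/

lemma beta_zero : beta 0 = 1 := by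
  simp [beta, numBPT]

lemma beta_succ (m : ℕ) : beta (m + 1) = beta m * (2 * m + 3) := by
  rw [beta, numBPT, show m + 1 + 3 = m + 3 + 1 by ring, Finset.prod_Icc_succ_top (by omega)]
  congr 1

namespace RTree

variable {α : Type}

section ComponentRoot

variable {E : Finset (List Bool)}

/-- An edge is addressed by its child endpoint, so the component of `l` in the forest cut
along `E` is rooted at the longest prefix of `l` lying in `E` (or at `[]` if there is none). -/
def componentRoot (E : Finset (List Bool)) (l : List Bool) : List Bool :=
  if l = [] then [] else if l ∈ E then l else componentRoot E l.dropLast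
termination_by l.length
decreasing_by
  rename_i h _
  have : 0 < l.length := List.length_pos_iff.mpr h
  simp only [List.length_dropLast]
  omega

@[simp]
lemma componentRoot_nil : componentRoot E [] = [] := by
  rw [componentRoot]; simp

lemma componentRoot_of_mem {l : List Bool} (h : l ∈ E) : componentRoot E l = l := by
  rw [componentRoot]
  split_ifs <;> simp_all

lemma componentRoot_of_notMem {l : List Bool} (hl : l ≠ []) (h : l ∉ E) :
    componentRoot E l = componentRoot E l.dropLast := by
  rw [componentRoot]
  simp [hl, h]

lemma componentRoot_singleton_of_notMem {c : Bool} (h : [c] ∉ E) : componentRoot E [c] = [] := by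
  rw [componentRoot_of_notMem (List.cons_ne_nil c []) h, List.dropLast_singleton,
    componentRoot_nil]

instance : Std.Symm (stepRel E) := ⟨fun _ _ => Or.symm⟩

lemma componentRoot_eq_of_reflTransGen {p q : List Bool}
    (h : Relation.ReflTransGen (stepRel E) p q) : componentRoot E p = componentRoot E q := by
  induction h with
  | refl => rfl
  | tail _ hstep ih =>
    refine ih.trans ?_
    rcases hstep with ⟨rfl, hne, hnotMem⟩ | ⟨rfl, hne, hnotMem⟩
    · exact componentRoot_of_notMem hne hnotMem
    · exact (componentRoot_of_notMem hne hnotMem).symm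

lemma reflTransGen_componentRoot (q : List Bool) :
    Relation.ReflTransGen (stepRel E) (componentRoot E q) q := by
  induction q using List.reverseRecOn with
  | nil => rw [componentRoot_nil]
  | append_singleton xs x ih =>
    by_cases h : xs ++ [x] ∈ E
    · rw [componentRoot_of_mem h]
    · rw [componentRoot_of_notMem (by simp) h, List.dropLast_concat]
      exact ih.tail (Or.inr ⟨List.dropLast_concat.symm, by simp, h⟩)

lemma reflTransGen_stepRel_iff {p q : List Bool} :
    Relation.ReflTransGen (stepRel E) p q ↔ componentRoot E p = componentRoot E q := by
  refine ⟨componentRoot_eq_of_reflTransGen, fun h => ?_⟩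
  have hp := Std.Symm.symm _ _ (reflTransGen_componentRoot (E := E) p)
  exact hp.trans (h ▸ reflTransGen_componentRoot q)

lemma component_eq_filter (t : RTree α) (E : Finset (List Bool)) (p : List Bool) :
    component t E p = (positions t).filter (componentRoot E · = componentRoot E p) := by
  simp only [component, reflTransGen_stepRel_iff, eq_comm]

end ComponentRoot

def componentRoots (t : RTree α) (E : Finset (List Bool)) : Finset (List Bool) :=
  (positions t).image (componentRoot E)

noncomputable def edgeCountAt (t : RTree α) (E : Finset (List Bool)) (r : List Bool) : ℕ :=
  ((internalEdges t).filter (fun e => e ∉ E ∧ componentRoot E e = r)).card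

lemma mem_positions_of_subtreeAt {t t' : RTree α} {p : List Bool}
    (h : subtreeAt t p = some t') : p ∈ positions t := by
  induction t generalizing p with
  | leaf a => cases p <;> simp_all [subtreeAt, positions]
  | node l r ihl ihr =>
    rcases p with _ | ⟨_ | _, p⟩
    · simp [positions]
    · simpa [positions] using ihl h
    · simpa [positions] using ihr h

lemma mem_internalEdges {t : RTree α} {p : List Bool} :
    p ∈ internalEdges t ↔ p ≠ [] ∧ ∃ t', subtreeAt t p = some t' ∧ t'.isNode := by
  simp only [internalEdges, Finset.mem_filter, and_iff_right_iff_imp]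
  rintro ⟨-, t', ht', -⟩
  exact mem_positions_of_subtreeAt ht'

lemma ne_nil_of_mem_internalEdges {t : RTree α} {p : List Bool} (h : p ∈ internalEdges t) :
    p ≠ [] :=
  (mem_internalEdges.mp h).1

lemma internalEdges_subset_positions (t : RTree α) : internalEdges t ⊆ positions t :=
  Finset.filter_subset _ _

lemma nil_mem_positions (t : RTree α) : [] ∈ positions t := by
  cases t <;> simp [positions]

lemma kappa_eq_edgeCountAt (t : RTree α) (E : Finset (List Bool)) :
    kappa t E = edgeCountAt t E [] := by
  unfold kappa compEdgeCount edgeCountAt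
  congr 1
  refine Finset.filter_congr fun e he => ?_
  rw [component_eq_filter, Finset.mem_filter, componentRoot_nil]
  simp [internalEdges_subset_positions t he]

lemma NEdges_eq_prod_componentRoots (t : RTree α) (E : Finset (List Bool)) :
    NEdges t E = ∏ r ∈ componentRoots t E, beta (edgeCountAt t E r) := by
  have hcomponents : components t E =
      (componentRoots t E).image (fun r => (positions t).filter (componentRoot E · = r)) := by
    simp only [components, componentRoots, Finset.image_image]
    exact Finset.image_congr fun p _ => component_eq_filter t E p
  have hinj : Set.InjOn (fun r => (positions t).filter (componentRoot E · = r))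
      (componentRoots t E) := by
    rintro _ hr r' - heq
    obtain ⟨q, hq, rfl⟩ := Finset.mem_image.mp hr
    have : q ∈ (positions t).filter (componentRoot E · = componentRoot E q) := by simp [hq]
    simp only at heq
    rw [heq] at this
    exact (Finset.mem_filter.mp this).2
  rw [NEdges, hcomponents, Finset.prod_image hinj]
  refine Finset.prod_congr rfl fun r _ => ?_
  unfold compEdgeCount edgeCountAt
  congr 2
  refine Finset.filter_congr fun e he => ?_
  simp [internalEdges_subset_positions t he]

def withLeaf (b : Bool) (a : α) (t : RTree α) : RTree α :=
  match b with
  | false => node t (leaf a)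
  | true => node (leaf a) t

section WithLeaf

variable {b : Bool} {a : α} {t : RTree α} {E E₁ : Finset (List Bool)}

lemma positions_withLeaf :
    positions (withLeaf b a t) = insert [] (insert [!b] ((positions t).image (List.cons b))) := by
  cases b <;>
  · ext q
    simp only [withLeaf, positions, Finset.mem_insert, Finset.mem_union, Finset.mem_image,
      Finset.mem_singleton, Bool.not_false, Bool.not_true]
    aesop

lemma internalEdges_withLeaf (ht : t.isNode) :
    internalEdges (withLeaf b a t) = insert [b] ((internalEdges t).image (List.cons b)) := by
  ext q
  simp only [Finset.mem_insert, Finset.mem_image, mem_internalEdges]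
  rcases q with _ | ⟨c, q⟩
  · simp
  · by_cases hc : c = b
    · subst hc
      have hsub : subtreeAt (withLeaf c a t) (c :: q) = subtreeAt t q := by cases c <;> rfl
      rcases q with _ | ⟨d, q⟩
      · simp [hsub, subtreeAt, ht]
      · simp [hsub]
    · have hsub : subtreeAt (withLeaf b a t) (c :: q) = subtreeAt (leaf a) q := by
        cases b <;> cases c <;> simp_all [withLeaf, subtreeAt]
      rcases q with _ | ⟨d, q⟩ <;> simp [hsub, subtreeAt, isNode, hc, Ne.symm hc]


def AgreesBelow (b : Bool) (E E₁ : Finset (List Bool)) : Prop :=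
  ∀ q, q ≠ [] → (b :: q ∈ E ↔ q ∈ E₁)

/-- Where a component root `r` of `t - E₁` lands in `withLeaf b a t - E`: at `b :: r`, except
that the root component of `t` is merged into the root component of `withLeaf b a t` unless
the edge `[b]` is cut. -/
def shiftRoot (E : Finset (List Bool)) (b : Bool) (r : List Bool) : List Bool :=
  if r = [] then componentRoot E [b] else b :: r

lemma componentRoot_cons (hE : AgreesBelow b E E₁) (q : List Bool) :
    componentRoot E (b :: q) = shiftRoot E b (componentRoot E₁ q) := by
  induction q using List.reverseRecOn with
  | nil => simp [shiftRoot]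
  | append_singleton xs x ih =>
    have hne : xs ++ [x] ≠ [] := by simp
    by_cases h : xs ++ [x] ∈ E₁
    · rw [componentRoot_of_mem ((hE _ hne).mpr h), componentRoot_of_mem h, shiftRoot, if_neg hne]
    · rw [componentRoot_of_notMem (by simp) (mt (hE _ hne).mp h), componentRoot_of_notMem hne h,
        ← List.cons_append, List.dropLast_concat, List.dropLast_concat, ih]

lemma shiftRoot_injective : Function.Injective (shiftRoot E b) := by
  have hroot : componentRoot E [b] = [] ∨ componentRoot E [b] = [b] := by
    by_cases h : [b] ∈ E
    · exact Or.inr (componentRoot_of_mem h)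
    · exact Or.inl (componentRoot_singleton_of_notMem h)
  intro r r' h
  unfold shiftRoot at h
  split_ifs at h <;> grind

lemma shiftRoot_ne_nil (hb : [b] ∈ E) (r : List Bool) : shiftRoot E b r ≠ [] := by
  unfold shiftRoot
  split_ifs <;> simp [componentRoot_of_mem hb]

lemma shiftRoot_eq_nil_iff (hb : [b] ∉ E) {r : List Bool} : shiftRoot E b r = [] ↔ r = [] := by
  unfold shiftRoot
  split_ifs <;> simp_all [componentRoot_singleton_of_notMem hb]

lemma componentRoots_withLeaf (hE : AgreesBelow b E E₁) (hb : [!b] ∉ E) :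
    componentRoots (withLeaf b a t) E =
      insert [] ((componentRoots t E₁).image (shiftRoot E b)) := by
  rw [componentRoots, positions_withLeaf, Finset.image_insert, Finset.image_insert,
    componentRoot_nil, componentRoot_singleton_of_notMem hb, Finset.insert_idem,
    Finset.image_image, componentRoots, Finset.image_image]
  congr 2
  funext q
  exact componentRoot_cons hE q

lemma edgeCountAt_withLeaf (ht : t.isNode) (hE : AgreesBelow b E E₁)
    (r : List Bool) :
    edgeCountAt (withLeaf b a t) E r = (if [b] ∉ E ∧ r = [] then 1 else 0) +
      ((internalEdges t).filter
        (fun e => e ∉ E₁ ∧ shiftRoot E b (componentRoot E₁ e) = r)).card := by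
  have hcons : ∀ e ∈ internalEdges t, (b :: e ∉ E ∧ componentRoot E (b :: e) = r) ↔
      (e ∉ E₁ ∧ shiftRoot E b (componentRoot E₁ e) = r) := fun e he => by
    rw [hE e (ne_nil_of_mem_internalEdges he), componentRoot_cons hE]
  have hcard : (((internalEdges t).image (List.cons b)).filter
      (fun e => e ∉ E ∧ componentRoot E e = r)).card =
      ((internalEdges t).filter
        (fun e => e ∉ E₁ ∧ shiftRoot E b (componentRoot E₁ e) = r)).card := by
    rw [Finset.filter_image, Finset.card_image_of_injective _ List.cons_injective]
    exact congrArg _ (Finset.filter_congr hcons)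
  have hnotMem : [b] ∉ ((internalEdges t).image (List.cons b)).filter
      (fun e => e ∉ E ∧ componentRoot E e = r) := by
    simp only [Finset.mem_filter, List.cons_injective.mem_finset_image]
    exact fun h => ne_nil_of_mem_internalEdges h.1 rfl
  unfold edgeCountAt
  rw [internalEdges_withLeaf ht, Finset.filter_insert, ← hcard]
  by_cases hb : [b] ∈ E
  · simp [hb]
  · simp only [hb, not_false_eq_true, true_and, componentRoot_singleton_of_notMem hb]
    rcases eq_or_ne r [] with rfl | hr
    · simp [Finset.card_insert_of_notMem hnotMem, add_comm]
    · simp [hr, hr.symm]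

lemma edgeCountAt_withLeaf_shiftRoot (ht : t.isNode)
    (hE : AgreesBelow b E E₁) (r : List Bool) :
    edgeCountAt (withLeaf b a t) E (shiftRoot E b r) =
      (if [b] ∉ E ∧ r = [] then 1 else 0) + edgeCountAt t E₁ r := by
  rw [edgeCountAt_withLeaf ht hE, edgeCountAt]
  congr 1
  · by_cases hb : [b] ∈ E
    · simp [hb]
    · simp [hb, shiftRoot_eq_nil_iff hb]
  · simp only [shiftRoot_injective.eq_iff]

lemma edgeCountAt_withLeaf_nil (ht : t.isNode) (hE : AgreesBelow b E E₁)
    (hb : [b] ∈ E) : edgeCountAt (withLeaf b a t) E [] = 0 := by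
  rw [edgeCountAt_withLeaf ht hE]
  simp [hb, shiftRoot_ne_nil hb]

lemma kappa_withLeaf_of_mem (ht : t.isNode) (hE : AgreesBelow b E E₁)
    (hb : [b] ∈ E) : kappa (withLeaf b a t) E = 0 := by
  rw [kappa_eq_edgeCountAt, edgeCountAt_withLeaf_nil ht hE hb]

lemma kappa_withLeaf_of_notMem (ht : t.isNode) (hE : AgreesBelow b E E₁)
    (hb : [b] ∉ E) : kappa (withLeaf b a t) E = kappa t E₁ + 1 := by
  have hshift : shiftRoot E b [] = [] := (shiftRoot_eq_nil_iff hb).mpr rfl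
  have hcount := edgeCountAt_withLeaf_shiftRoot (a := a) ht hE []
  rw [hshift] at hcount
  simp [kappa_eq_edgeCountAt, hcount, hb, add_comm]

lemma NEdges_withLeaf_of_mem (ht : t.isNode) (hE : AgreesBelow b E E₁)
    (hb : [b] ∈ E) (hb' : [!b] ∉ E) : NEdges (withLeaf b a t) E = NEdges t E₁ := by
  have hnil : [] ∉ (componentRoots t E₁).image (shiftRoot E b) := by
    simp only [Finset.mem_image, not_exists, not_and]
    exact fun r _ => shiftRoot_ne_nil hb r
  rw [NEdges_eq_prod_componentRoots, componentRoots_withLeaf hE hb', Finset.prod_insert hnil,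
    Finset.prod_image shiftRoot_injective.injOn, edgeCountAt_withLeaf_nil ht hE hb, beta_zero,
    one_mul, NEdges_eq_prod_componentRoots]
  exact Finset.prod_congr rfl fun r _ => by simp [edgeCountAt_withLeaf_shiftRoot ht hE, hb]

lemma NEdges_withLeaf_of_notMem (ht : t.isNode) (hE : AgreesBelow b E E₁)
    (hb : [b] ∉ E) (hb' : [!b] ∉ E) :
    NEdges (withLeaf b a t) E = NEdges t E₁ * (2 * kappa t E₁ + 3) := by
  have hshift : shiftRoot E b [] = [] := (shiftRoot_eq_nil_iff hb).mpr rfl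
  have hroot : [] ∈ componentRoots t E₁ :=
    Finset.mem_image.mpr ⟨[], nil_mem_positions t, componentRoot_nil⟩
  rw [NEdges_eq_prod_componentRoots, componentRoots_withLeaf hE hb',
    Finset.insert_eq_of_mem (Finset.mem_image.mpr ⟨[], hroot, hshift⟩),
    Finset.prod_image shiftRoot_injective.injOn, ← Finset.mul_prod_erase _ _ hroot,
    NEdges_eq_prod_componentRoots, ← Finset.mul_prod_erase _ _ hroot, kappa_eq_edgeCountAt,
    edgeCountAt_withLeaf_shiftRoot ht hE]
  have hrest : ∀ r ∈ (componentRoots t E₁).erase [],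
      beta (edgeCountAt (withLeaf b a t) E (shiftRoot E b r)) = beta (edgeCountAt t E₁ r) :=
    fun r hr => by simp [edgeCountAt_withLeaf_shiftRoot ht hE, Finset.ne_of_mem_erase hr]
  rw [Finset.prod_congr rfl hrest, if_pos ⟨hb, rfl⟩, add_comm, beta_succ]
  ring

lemma sum_powerset_internalEdges_withLeaf {M : Type*} [AddCommMonoid M] (ht : t.isNode)
    (f : Finset (List Bool) → M) :
    ∑ E ∈ (internalEdges (withLeaf b a t)).powerset, f E =
      ∑ E₁ ∈ (internalEdges t).powerset, f (E₁.image (List.cons b)) +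
      ∑ E₁ ∈ (internalEdges t).powerset, f (insert [b] (E₁.image (List.cons b))) := by
  have hb : [b] ∉ (internalEdges t).image (List.cons b) := by
    rw [List.cons_injective.mem_finset_image]
    exact fun h => ne_nil_of_mem_internalEdges h rfl
  have hinj := (Finset.image_injective (List.cons_injective (a := b))).injOn
    (s := ((internalEdges t).powerset : Set (Finset (List Bool))))
  rw [internalEdges_withLeaf ht, Finset.sum_powerset_insert hb, Finset.powerset_image,
    Finset.sum_image hinj, Finset.sum_image hinj]

/-- The first sum runs over the cut sets avoiding the edge `[b]`, the second over those
containing it. -/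
lemma R_withLeaf (ht : t.isNode) (s k : ℕ) :
    R (withLeaf b a t) s k =
      ∑ E₁ ∈ (internalEdges t).powerset,
        (if E₁.card = s ∧ kappa t E₁ + 1 = k
          then NEdges t E₁ * (2 * kappa t E₁ + 3) else 0) +
      ∑ E₁ ∈ (internalEdges t).powerset,
        (if E₁.card + 1 = s ∧ 0 = k then NEdges t E₁ else 0) := by
  rw [R, Finset.sum_filter, sum_powerset_internalEdges_withLeaf ht]
  congr 1 <;> refine Finset.sum_congr rfl fun E₁ hE₁ => ?_
  all_goals
    have hnil : [] ∉ E₁ := fun h =>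
      ne_nil_of_mem_internalEdges (Finset.mem_powerset.mp hE₁ h) rfl
    have hb : [b] ∉ E₁.image (List.cons b) := by rwa [List.cons_injective.mem_finset_image]
  · have hE : AgreesBelow b (E₁.image (List.cons b)) E₁ :=
      fun q _ => List.cons_injective.mem_finset_image
    rw [Finset.card_image_of_injective _ List.cons_injective, kappa_withLeaf_of_notMem ht hE hb,
      NEdges_withLeaf_of_notMem ht hE hb (by simp)]
  · have hE : AgreesBelow b (insert [b] (E₁.image (List.cons b))) E₁ :=
      fun q hq => by simp [hq, List.cons_injective.mem_finset_image]
    have hmem : [b] ∈ insert [b] (E₁.image (List.cons b)) := Finset.mem_insert_self _ _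
    rw [Finset.card_insert_of_notMem hb, Finset.card_image_of_injective _ List.cons_injective,
      kappa_withLeaf_of_mem ht hE hmem, NEdges_withLeaf_of_mem ht hE hmem (by simp)]

lemma R_withLeaf_zero (ht : t.isNode) {s : ℕ} (hs : 1 ≤ s) :
    R (withLeaf b a t) s 0 =
      ∑ k₁ ∈ Finset.range ((internalEdges t).card + 1), R t (s - 1) k₁ := by
  have hzero : ∑ E₁ ∈ (internalEdges t).powerset, (if E₁.card = s ∧ kappa t E₁ + 1 = 0
      then NEdges t E₁ * (2 * kappa t E₁ + 3) else 0) = 0 :=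
    Finset.sum_eq_zero fun _ _ => if_neg (by omega)
  have hkappa : ∀ E₁ ∈ (internalEdges t).powerset.filter (·.card = s - 1),
      kappa t E₁ ∈ Finset.range ((internalEdges t).card + 1) :=
    fun _ _ => Finset.mem_range_succ_iff.mpr (Finset.card_filter_le _ _)
  calc R (withLeaf b a t) s 0
      = ∑ E₁ ∈ (internalEdges t).powerset.filter (·.card = s - 1), NEdges t E₁ := by
        rw [R_withLeaf ht, hzero, zero_add, Finset.sum_filter]
        exact Finset.sum_congr rfl fun _ _ => if_congr (by omega) rfl rfl
    _ = _ := by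
        rw [← Finset.sum_fiberwise_of_maps_to hkappa]
        simp only [R, Finset.filter_filter]

lemma R_withLeaf_of_pos (ht : t.isNode) {s k : ℕ} (hk : 1 ≤ k) :
    R (withLeaf b a t) s k = R t s (k - 1) * (2 * k + 1) := by
  have hzero : ∑ E₁ ∈ (internalEdges t).powerset,
      (if E₁.card + 1 = s ∧ 0 = k then NEdges t E₁ else 0) = 0 :=
    Finset.sum_eq_zero fun _ _ => if_neg (by omega)
  rw [R_withLeaf ht, hzero, add_zero, R, Finset.sum_filter, Finset.sum_mul]
  refine Finset.sum_congr rfl fun E₁ _ => ?_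
  grind

end WithLeaf

end RTree

theorem R_rec_one_internal_child_general (n : ℕ) (tv c₁ c₂ v₁ : RTree (Fin (n - 1)))
    (htv : tv = RTree.node c₁ c₂)
    (hone : (c₁.isNode ∧ ¬ c₂.isNode ∧ v₁ = c₁) ∨ (¬ c₁.isNode ∧ c₂.isNode ∧ v₁ = c₂))
    (s : ℕ) (hs : 1 ≤ s) :
    R tv s 0 = ∑ k₁ ∈ Finset.range ((internalEdges v₁).card + 1), R v₁ (s - 1) k₁ ∧
      ∀ k : ℕ, 1 ≤ k → R tv s k = R v₁ s (k - 1) * (2 * k + 1) := by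
  obtain ⟨b, a, rfl, hv⟩ : ∃ b a, tv = withLeaf b a v₁ ∧ v₁.isNode := by
    rcases hone with ⟨hv, hleaf, rfl⟩ | ⟨hleaf, hv, rfl⟩
    · cases c₂ with
      | leaf a => exact ⟨false, a, htv, hv⟩
      | node => exact absurd trivial hleaf
    · cases c₁ with
      | leaf a => exact ⟨true, a, htv, hv⟩
      | node => exact absurd trivial hleaf
  exact ⟨R_withLeaf_zero hv hs, fun k hk => R_withLeaf_of_pos hv hk⟩

/-- Let `T ∈ BPT(n)`, rooted as described, and let `v` be an internal
vertex with exactly one internal child `v₁`.  Then for every `s ≥ 1`: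
`R(v,s,0) = ∑_{k₁ ≥ 0} R(v₁, s-1, k₁)` and, for every `k ≥ 1`,
`R(v,s,k) = R(v₁, s, k-1) · (2k+1)`.  (The sum over `k₁ ≥ 0` is finite, since
`R(v₁,s-1,k₁) = 0` for `k₁ > n_{v₁} = |E̊(T_{v₁})|`.) -/
theorem R_rec_one_internal_child (n : ℕ) (hn : 3 ≤ n) (t : RTree (Fin (n - 1)))
    (hnodup : t.labels.Nodup) (hcard : Multiset.card t.labels = n - 1)
    (p : List Bool) (tv c₁ c₂ v₁ : RTree (Fin (n - 1)))
    (hp : t.subtreeAt p = some tv) (htv : tv = RTree.node c₁ c₂)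
    (hone : (c₁.isNode ∧ ¬ c₂.isNode ∧ v₁ = c₁) ∨ (¬ c₁.isNode ∧ c₂.isNode ∧ v₁ = c₂))
    (s : ℕ) (hs : 1 ≤ s) :
    R tv s 0 = ∑ k₁ ∈ Finset.range ((internalEdges v₁).card + 1), R v₁ (s - 1) k₁ ∧
      ∀ k : ℕ, 1 ≤ k → R tv s k = R v₁ s (k - 1) * (2 * k + 1) :=
  R_rec_one_internal_child_general n tv c₁ c₂ v₁ htv hone s hs
end

section
/- There exists a constant C > 0 such that for all integers n ≥ 4, all integers c with 1 ≤ c ≤ n/2, and all integers r with 0 ≤ r ≤ n−2: (c/(2n))^r · | (∏_{i=1}^{r−1} (1 − i/c)) / (∏_{j=1}^{r} (1 − (2j+3)/(2n))) − 1 | ≤ C/n, where empty products equal 1. -/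
/-! If `r > c`, the numerator contains the factor `1 - c/c = 0`, and
`(c/2n)^r ≤ (1/4)^c · c/(2n)` is already `O(1/n)`. If `r ≤ c`, both products `P`, `Q` lie
in `[0, 1]`, so `|P/Q - 1| ≤ (2 - P - Q)/Q`, and the Weierstrass product inequality
`1 - ∑ aᵢ ≤ ∏ (1 - aᵢ)` gives `c(1 - P) ≤ r²` and `c(1 - Q) ≤ r(2r+3)/4`.
Comparing `(c/2n)^r` with `Q` factor by factor gives `(c/2n)^r ≤ (2/3)^(r-1) · c/(n-3) · Q`,
and the geometric factor absorbs the `r²`. -/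

open Finset

theorem one_sub_sum_le_prod_one_sub {ι R : Type*} [CommRing R] [LinearOrder R]
    [IsStrictOrderedRing R] (s : Finset ι) {f : ι → R} (h0 : ∀ i ∈ s, 0 ≤ f i)
    (h1 : ∀ i ∈ s, f i ≤ 1) :
    1 - ∑ i ∈ s, f i ≤ ∏ i ∈ s, (1 - f i) := by
  induction s using Finset.cons_induction with
  | empty => simp
  | cons a s ha ih =>
    rw [sum_cons, prod_cons]
    have h0a := h0 a (mem_cons_self a s)
    have h1a := h1 a (mem_cons_self a s)
    have ih := ih (fun i hi => h0 i (mem_cons_of_mem hi)) (fun i hi => h1 i (mem_cons_of_mem hi))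
    have hs : 0 ≤ ∑ i ∈ s, f i := sum_nonneg fun i hi => h0 i (mem_cons_of_mem hi)
    nlinarith

theorem one_sub_prod_one_sub_le_card_mul {ι R : Type*} [CommRing R] [LinearOrder R]
    [IsStrictOrderedRing R] (s : Finset ι) {f : ι → R} {b : R} (h0 : ∀ i ∈ s, 0 ≤ f i)
    (h1 : ∀ i ∈ s, f i ≤ 1) (hb : ∀ i ∈ s, f i ≤ b) :
    1 - ∏ i ∈ s, (1 - f i) ≤ #s * b := by
  have := one_sub_sum_le_prod_one_sub s h0 h1
  have := sum_le_card_nsmul s f b hb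
  rw [nsmul_eq_mul] at this
  linarith

theorem abs_div_sub_one_le {P Q : ℝ} (hP1 : P ≤ 1) (hQ0 : 0 < Q) (hQ1 : Q ≤ 1) :
    |P / Q - 1| ≤ ((1 - P) + (1 - Q)) / Q := by
  rw [div_sub_one hQ0.ne', abs_div, abs_of_pos hQ0]
  gcongr
  rw [abs_le]
  constructor <;> linarith

theorem sq_le_hundred_mul_three_halves_pow (k : ℕ) : (k : ℝ) ^ 2 ≤ 100 * (3 / 2) ^ k := by
  induction k with
  | zero => norm_num
  | succ m ih =>
    have : (1 : ℝ) ≤ (3 / 2) ^ m := one_le_pow₀ (by norm_num)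
    have hpow : (3 / 2 : ℝ) ^ (m + 1) = 3 / 2 * (3 / 2) ^ m := pow_succ' _ _
    push_cast
    nlinarith [sq_nonneg ((m : ℝ) - 5 / 2)]

theorem succ_sq_mul_two_thirds_pow_le (m : ℕ) : ((m : ℝ) + 1) ^ 2 * (2 / 3) ^ m ≤ 150 := by
  have h := sq_le_hundred_mul_three_halves_pow (m + 1)
  push_cast at h
  calc ((m : ℝ) + 1) ^ 2 * (2 / 3) ^ m ≤ 100 * (3 / 2) ^ (m + 1) * (2 / 3) ^ m := by gcongr
    _ = 150 * ((3 / 2) * (2 / 3)) ^ m := by rw [mul_pow]; ring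
    _ = 150 := by norm_num

theorem div_two_mul_pow_le_of_lt {n c r : ℕ} (hn : 0 < n) (hcn : (c : ℝ) ≤ n / 2) (hcr : c < r) :
    ((c : ℝ) / (2 * n)) ^ r ≤ 1 / (2 * n) := by
  have hn : (0 : ℝ) < n := by exact_mod_cast hn
  set x := (c : ℝ) / (2 * n)
  have hx0 : 0 ≤ x := by positivity
  have hx : x ≤ 1 / 4 := by
    rw [div_le_div_iff₀ (by positivity) (by norm_num)]; linarith
  have hc4 : (c : ℝ) ≤ 4 ^ c := by exact_mod_cast (Nat.lt_pow_self (by norm_num : 1 < 4)).le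
  calc x ^ r ≤ x ^ (c + 1) := pow_le_pow_of_le_one hx0 (by linarith) hcr
    _ = x ^ c * c / (2 * n) := by rw [pow_succ, mul_div_assoc]
    _ ≤ (1 / 4) ^ c * 4 ^ c / (2 * n) := by gcongr
    _ = 1 / (2 * n) := by rw [← mul_pow]; norm_num

theorem div_le_mul_one_sub_div {c a t N : ℝ} (hN : 0 < N) (h : c ≤ a * (N - t)) :
    c / N ≤ a * (1 - t / N) := by
  rw [one_sub_div hN.ne', ← mul_div_assoc]
  exact div_le_div_of_nonneg_right h hN.le

/-- For `j < c` each factor of the denominator absorbs `c / (2n)` with room `2/3` to spare;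
the last factor `j = r ≤ c` only absorbs it up to `c / (n - 3)`. -/
theorem div_two_mul_pow_le_two_thirds_pow_mul_prod {n c m : ℕ} (hn : 4 ≤ n)
    (hcn : (c : ℝ) ≤ n / 2) (hmc : m + 1 ≤ c) :
    ((c : ℝ) / (2 * n)) ^ (m + 1) ≤
      (2 / 3) ^ m * (c / (n - 3)) * ∏ j ∈ Icc 1 (m + 1), (1 - (2 * (j : ℝ) + 3) / (2 * n)) := by
  have hn' : (4 : ℝ) ≤ n := by exact_mod_cast hn
  have hmc' : (m : ℝ) + 1 ≤ c := by exact_mod_cast hmc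
  have hfac : ∀ j ∈ Icc 1 m, (c : ℝ) / (2 * n) ≤ 2 / 3 * (1 - (2 * (j : ℝ) + 3) / (2 * n)) := by
    intro j hj
    have hj : (j : ℝ) ≤ m := by exact_mod_cast (mem_Icc.mp hj).2
    exact div_le_mul_one_sub_div (by positivity) (by linarith)
  have hlast : (c : ℝ) / (2 * n) ≤ c / (n - 3) * (1 - (2 * ((m : ℝ) + 1) + 3) / (2 * n)) := by
    refine div_le_mul_one_sub_div (by positivity) ?_
    rw [div_mul_eq_mul_div, le_div_iff₀ (by linarith)]
    nlinarith
  have hhead : ((c : ℝ) / (2 * n)) ^ m ≤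
      (2 / 3) ^ m * ∏ j ∈ Icc 1 m, (1 - (2 * (j : ℝ) + 3) / (2 * n)) := by
    calc ((c : ℝ) / (2 * n)) ^ m = ∏ _j ∈ Icc 1 m, (c : ℝ) / (2 * n) := by
          rw [prod_const, Nat.card_Icc, Nat.add_sub_cancel]
      _ ≤ ∏ j ∈ Icc 1 m, 2 / 3 * (1 - (2 * (j : ℝ) + 3) / (2 * n)) :=
        prod_le_prod (fun _ _ => by positivity) hfac
      _ = _ := by rw [prod_mul_distrib, prod_const, Nat.card_Icc, Nat.add_sub_cancel]
  rw [prod_Icc_succ_top (by omega), pow_succ]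
  push_cast
  calc _ ≤ (2 / 3) ^ m * (∏ j ∈ Icc 1 m, (1 - (2 * (j : ℝ) + 3) / (2 * n))) *
        (c / (n - 3) * (1 - (2 * ((m : ℝ) + 1) + 3) / (2 * n))) :=
        mul_le_mul hhead hlast (by positivity) ((by positivity : (0 : ℝ) ≤ _ ^ m).trans hhead)
    _ = _ := by ring

theorem div_two_mul_pow_mul_abs_div_sub_one_le {n c m : ℕ} (hn : 4 ≤ n)
    (hcn : (c : ℝ) ≤ n / 2) (hmc : m + 1 ≤ c) :
    ((c : ℝ) / (2 * n)) ^ (m + 1) *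
        |(∏ i ∈ Icc 1 m, (1 - (i : ℝ) / c)) /
          (∏ j ∈ Icc 1 (m + 1), (1 - (2 * (j : ℝ) + 3) / (2 * n))) - 1| ≤ 1350 / n := by
  have hn' : (4 : ℝ) ≤ n := by exact_mod_cast hn
  have hmc' : (m : ℝ) + 1 ≤ c := by exact_mod_cast hmc
  have hc : (0 : ℝ) < c := by linarith
  have hn3 : (0 : ℝ) < n - 3 := by linarith
  set P := ∏ i ∈ Icc 1 m, (1 - (i : ℝ) / c)
  set Q := ∏ j ∈ Icc 1 (m + 1), (1 - (2 * (j : ℝ) + 3) / (2 * n))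
  have hfi : ∀ i ∈ Icc 1 m, (0 : ℝ) ≤ i / c ∧ (i : ℝ) / c ≤ m / c := fun i hi =>
    ⟨by positivity, by gcongr; exact_mod_cast (mem_Icc.mp hi).2⟩
  have hfj : ∀ j ∈ Icc 1 (m + 1), 0 ≤ (2 * (j : ℝ) + 3) / (2 * n) ∧
      (2 * (j : ℝ) + 3) / (2 * n) ≤ (2 * ((m : ℝ) + 1) + 3) / (2 * n) := fun j hj =>
    ⟨by positivity, by gcongr; exact_mod_cast (mem_Icc.mp hj).2⟩
  have hm1 : (m : ℝ) / c ≤ 1 := (div_le_one hc).mpr (by linarith)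
  have hmQ : (2 * ((m : ℝ) + 1) + 3) / (2 * n) < 1 :=
    (div_lt_one (by positivity)).mpr (by linarith)
  have hP1 : P ≤ 1 :=
    prod_le_one (fun i hi => by linarith [hfi i hi]) (fun i hi => by linarith [hfi i hi])
  have hQ0 : 0 < Q := prod_pos fun j hj => by linarith [hfj j hj]
  have hQ1 : Q ≤ 1 :=
    prod_le_one (fun j hj => by linarith [hfj j hj]) (fun j hj => by linarith [hfj j hj])
  have hcP : c * (1 - P) ≤ m ^ 2 := by
    have := one_sub_prod_one_sub_le_card_mul (Icc 1 m) (fun i hi => (hfi i hi).1)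
      (fun i hi => (hfi i hi).2.trans hm1) (fun i hi => (hfi i hi).2)
    rw [Nat.card_Icc, Nat.add_sub_cancel, mul_div_assoc', le_div_iff₀ hc] at this
    linarith
  have hcQ : c * (1 - Q) ≤ ((m : ℝ) + 1) * (2 * ((m : ℝ) + 1) + 3) / 4 := by
    have := one_sub_prod_one_sub_le_card_mul (Icc 1 (m + 1)) (fun j hj => (hfj j hj).1)
      (fun j hj => (hfj j hj).2.trans hmQ.le) (fun j hj => (hfj j hj).2)
    rw [Nat.card_Icc, Nat.add_sub_cancel] at this
    push_cast at this
    calc c * (1 - Q) ≤ n / 2 * (1 - Q) := mul_le_mul_of_nonneg_right hcn (by linarith)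
      _ ≤ n / 2 * (((m : ℝ) + 1) * ((2 * ((m : ℝ) + 1) + 3) / (2 * n))) := by gcongr
      _ = ((m : ℝ) + 1) * (2 * ((m : ℝ) + 1) + 3) / 4 := by field_simp; ring
  calc ((c : ℝ) / (2 * n)) ^ (m + 1) * |P / Q - 1|
      ≤ (2 / 3) ^ m * (c / (n - 3)) * Q * (((1 - P) + (1 - Q)) / Q) :=
        mul_le_mul (div_two_mul_pow_le_two_thirds_pow_mul_prod hn hcn hmc)
          (abs_div_sub_one_le hP1 hQ0 hQ1) (abs_nonneg _) (by positivity [hn3.le, hQ0.le])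
    _ = (2 / 3) ^ m * (c * (1 - P) + c * (1 - Q)) / (n - 3) := by field_simp
    _ ≤ (2 / 3) ^ m * (9 / 4 * ((m : ℝ) + 1) ^ 2) / (n - 3) := by
        gcongr
        nlinarith [(m.cast_nonneg : (0 : ℝ) ≤ m)]
    _ = 9 / 4 * (((m : ℝ) + 1) ^ 2 * (2 / 3) ^ m) / (n - 3) := by ring
    _ ≤ 9 / 4 * 150 / (n - 3) := by
        gcongr
        exact succ_sq_mul_two_thirds_pow_le m
    _ ≤ 1350 / n := by rw [div_le_div_iff₀ hn3 (by linarith)]; linarith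

/-- There is a constant `C > 0` such that for all integers `n ≥ 4`,
all integers `c` with `1 ≤ c ≤ n/2` and all integers `r` with `0 ≤ r ≤ n-2`:
`(c/(2n))^r · |(∏_{i=1}^{r-1} (1 - i/c)) / (∏_{j=1}^{r} (1 - (2j+3)/(2n))) - 1| ≤ C/n`
(empty products equal `1`). -/
theorem f_n_r_le_C_div_n :
    ∃ C : ℝ, 0 < C ∧ ∀ n : ℕ, 4 ≤ n → ∀ c : ℕ, 1 ≤ c → (c : ℝ) ≤ (n : ℝ) / 2 →
      ∀ r : ℕ, r ≤ n - 2 →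
        ((c : ℝ) / (2 * n)) ^ r *
            |(∏ i ∈ Finset.Icc 1 (r - 1), (1 - (i : ℝ) / c)) /
                (∏ j ∈ Finset.Icc 1 r, (1 - (2 * (j : ℝ) + 3) / (2 * n))) - 1| ≤
          C / n := by
  refine ⟨1350, by norm_num, fun n hn c hc hcn r _ => ?_⟩
  have hn' : (0 : ℝ) < n := by exact_mod_cast (by omega : 0 < n)
  obtain rfl | ⟨m, rfl⟩ : r = 0 ∨ ∃ m, r = m + 1 := by cases r <;> simp
  · simp only [pow_zero, zero_tsub, Order.lt_one_iff, Icc_eq_empty_of_lt, prod_empty, div_one,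
      sub_self, abs_zero, mul_zero]
    positivity
  rw [Nat.add_sub_cancel]
  rcases lt_or_ge c (m + 1) with hcr | hrc
  · have hc' : (c : ℝ) ≠ 0 := Nat.cast_ne_zero.mpr (by omega)
    rw [prod_eq_zero (i := c) (mem_Icc.mpr ⟨hc, by omega⟩) (by rw [div_self hc', sub_self]),
      zero_div, zero_sub, abs_neg, abs_one, mul_one]
    calc ((c : ℝ) / (2 * n)) ^ (m + 1) ≤ 1 / (2 * n) :=
          div_two_mul_pow_le_of_lt (by omega) hcn hcr
      _ ≤ 1350 / n := by rw [div_le_div_iff₀ (by positivity) hn']; linarith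
  · exact div_two_mul_pow_mul_abs_div_sub_one_le hn hcn hrc
end
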